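/- arXiv:2103.12855 — 2 statements merged into one kernel-verified Lean document; each statement's English description precedes it below -/
import Mathlib

section
/- If f_0(n) := Σ_{k≥0} a(n,k)^2, then f_0(n) = 3 f_0(n-1) + 4 f_1(n-1) for all n ≥ 1, where f_1(n) := Σ_{k≥0} a(n,k)·a(n, k - 2^n). -/
open Polynomial

noncomputable def F (n : ℕ) : Polynomial ℤ :=
  ∏ i ∈ Finset.range n, (1 + X ^ (2 ^ i) + X ^ (2 ^ (i + 1)))

noncomputable def a (n : ℕ) (k : ℤ) : ℤ :=
  if 0 ≤ k then (F n).coeff k.toNat else 0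

noncomputable def f0 (n : ℕ) : ℤ := ∑ᶠ k : ℕ, (a n k) ^ 2

noncomputable def f1 (n : ℕ) : ℤ := ∑ᶠ k : ℕ, a n k * a n ((k : ℤ) - 2 ^ n)

/-!
Put `M = 2 ^ n`. Since `F (n + 1) = F n * (1 + X ^ M + X ^ (2 * M))`, the coefficients satisfy
`a (n + 1) k = a n k + a n (k - M) + a n (k - 2 * M)`. Squaring and summing over `k`, each of the
nine products becomes, after shifting `k`, a value of the autocorrelation
`c d = ∑ k, a n k * a n (k - d)` at `d ∈ {0, ±M, ±2M}`; as `c` is even this gives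
`3 c 0 + 4 c M + 2 c (2 * M)`, and `c (2 * M) = 0` because `F n` has degree `< 2 * M`.
-/

open Function

section Autocorrelation

variable {G R : Type*} [AddCommGroup G] [CommSemiring R]

noncomputable def autocorr (g : G → R) (d : G) : R := ∑ᶠ k, g k * g (k - d)

theorem finsum_mul_shift_eq_autocorr (g : G → R) (s t : G) :
    ∑ᶠ k, g (k - s) * g (k - t) = autocorr g (t - s) := by
  rw [autocorr, ← finsum_comp_equiv (Equiv.addRight s)]
  refine finsum_congr fun k => ?_
  simp only [Equiv.coe_addRight, add_sub_cancel_right, sub_sub_eq_add_sub]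

theorem autocorr_neg (g : G → R) (d : G) : autocorr g (-d) = autocorr g d := by
  rw [← zero_sub, ← finsum_mul_shift_eq_autocorr, autocorr]
  simp only [sub_zero, mul_comm]

theorem autocorr_zero_sum_shifts {ι : Type*} {g : G → R} (hg : HasFiniteSupport g)
    (s : Finset ι) (σ : ι → G) :
    autocorr (fun k => ∑ i ∈ s, g (k - σ i)) 0 =
      ∑ i ∈ s, ∑ j ∈ s, autocorr g (σ j - σ i) := by
  have hshift (i : ι) : HasFiniteSupport fun k => g (k - σ i) :=
    hg.comp_of_injective sub_left_injective
  have hprod (i j : ι) : HasFiniteSupport fun k => g (k - σ i) * g (k - σ j) :=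
    (hshift i).fun_mul_left _
  simp only [autocorr, sub_zero, Finset.sum_mul_sum]
  rw [finsum_sum_comm _ _ fun i _ => HasFiniteSupport.sum (fun j => hprod i j) s]
  refine Finset.sum_congr rfl fun i _ => ?_
  rw [finsum_sum_comm _ _ fun j _ => hprod i j]
  exact Finset.sum_congr rfl fun j _ => finsum_mul_shift_eq_autocorr g _ _

theorem autocorr_zero_three_shifts {g : G → R} (hg : HasFiniteSupport g) (d : G) :
    autocorr (fun k => g k + g (k - d) + g (k - 2 • d)) 0 =
      3 * autocorr g 0 + 4 * autocorr g d + 2 * autocorr g (2 • d) := by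
  rw [two_nsmul]
  have hexpand := autocorr_zero_sum_shifts hg Finset.univ ![0, d, d + d]
  simp only [Fin.sum_univ_three, Matrix.cons_val_zero, Matrix.cons_val_one, Matrix.cons_val,
    sub_zero, zero_sub, sub_self, add_sub_cancel_right, sub_add_cancel_right, autocorr_neg] at hexpand
  rw [hexpand]
  ring

end Autocorrelation

section IntCoeff

variable {R : Type*} [Semiring R]

def intCoeff (p : R[X]) (k : ℤ) : R := if 0 ≤ k then p.coeff k.toNat else 0

theorem intCoeff_of_neg (p : R[X]) {k : ℤ} (hk : k < 0) : intCoeff p k = 0 :=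
  if_neg hk.not_ge

theorem intCoeff_natCast (p : R[X]) (k : ℕ) : intCoeff p k = p.coeff k := by
  simp [intCoeff]

theorem intCoeff_of_natDegree_lt (p : R[X]) {k : ℤ} (hk : p.natDegree < k) :
    intCoeff p k = 0 := by
  lift k to ℕ using by omega
  exact (intCoeff_natCast p k).trans (coeff_eq_zero_of_natDegree_lt (by exact_mod_cast hk))

theorem intCoeff_add (p q : R[X]) (k : ℤ) : intCoeff (p + q) k = intCoeff p k + intCoeff q k := by
  simp only [intCoeff, coeff_add]
  split_ifs <;> simp

theorem intCoeff_mul_X_pow (p : R[X]) (j : ℕ) (k : ℤ) :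
    intCoeff (p * X ^ j) k = intCoeff p (k - j) := by
  simp only [intCoeff, coeff_mul_X_pow']
  split_ifs <;> first | rfl | omega | congr 1; omega

theorem hasFiniteSupport_intCoeff (p : R[X]) : HasFiniteSupport (intCoeff p) := by
  refine (Set.finite_Icc (0 : ℤ) p.natDegree).subset fun k hk => ?_
  by_contra h
  rw [Set.mem_Icc, not_and_or, not_le, not_le] at h
  exact hk (h.elim (intCoeff_of_neg p) (intCoeff_of_natDegree_lt p))

end IntCoeff

theorem finsum_natCast_eq_finsum {M : Type*} [AddCommMonoid M] {f : ℤ → M}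
    (hf : ∀ k < 0, f k = 0) : ∑ᶠ k : ℕ, f k = ∑ᶠ k : ℤ, f k := by
  rw [← finsum_mem_range Nat.cast_injective]
  refine (finsum_mem_inter_support_eq f _ _ (Set.ext fun k => ?_)).trans (finsum_mem_univ f)
  simp only [Set.mem_inter_iff, Set.mem_range, Set.mem_univ, true_and, mem_support,
    and_iff_right_iff_imp]
  intro hk
  exact ⟨k.toNat, Int.toNat_of_nonneg (not_lt.mp fun h => hk (hf k h))⟩

theorem F_succ (n : ℕ) : F (n + 1) = F n * (1 + X ^ 2 ^ n + X ^ (2 * 2 ^ n)) := by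
  rw [F, Finset.prod_range_succ, ← F, pow_succ']

theorem natDegree_F_lt (n : ℕ) : (F n).natDegree < 2 * 2 ^ n := by
  induction n with
  | zero => simp [F]
  | succ n ih =>
    have hfactor : (1 + X ^ 2 ^ n + X ^ (2 * 2 ^ n) : ℤ[X]).natDegree ≤ 2 * 2 ^ n := by
      compute_degree
      omega
    calc (F (n + 1)).natDegree
        ≤ (F n).natDegree + (1 + X ^ 2 ^ n + X ^ (2 * 2 ^ n) : ℤ[X]).natDegree :=
          F_succ n ▸ natDegree_mul_le
      _ < 2 * 2 ^ (n + 1) := by rw [pow_succ]; omega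

theorem a_eq_intCoeff (n : ℕ) : a n = intCoeff (F n) := rfl

theorem hasFiniteSupport_a (n : ℕ) : HasFiniteSupport (a n) :=
  hasFiniteSupport_intCoeff (F n)

theorem a_succ (n : ℕ) (k : ℤ) :
    a (n + 1) k = a n k + a n (k - 2 ^ n) + a n (k - 2 • 2 ^ n) := by
  simp only [a_eq_intCoeff, F_succ, mul_add, mul_one, intCoeff_add, intCoeff_mul_X_pow]
  push_cast
  rw [two_nsmul, two_mul]

theorem autocorr_a_two_mul_two_pow (n : ℕ) : autocorr (a n) (2 • 2 ^ n) = 0 := by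
  refine finsum_eq_zero_of_forall_eq_zero fun k => ?_
  have hdeg : ((F n).natDegree : ℤ) < 2 * 2 ^ n := by exact_mod_cast natDegree_F_lt n
  rw [two_nsmul, a_eq_intCoeff]
  rcases lt_or_ge k (2 * 2 ^ n) with hk | hk
  · exact mul_eq_zero_of_right _ (intCoeff_of_neg _ (by linarith))
  · exact mul_eq_zero_of_left (intCoeff_of_natDegree_lt _ (by linarith)) _

theorem f0_eq_autocorr (n : ℕ) : f0 n = autocorr (a n) 0 := by
  simp only [f0, autocorr, sub_zero, ← sq]
  exact finsum_natCast_eq_finsum (f := fun k => a n k ^ 2) fun k hk => by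
    rw [a_eq_intCoeff, intCoeff_of_neg _ hk, sq, zero_mul]

theorem f1_eq_autocorr (n : ℕ) : f1 n = autocorr (a n) (2 ^ n) :=
  finsum_natCast_eq_finsum (f := fun k => a n k * a n (k - 2 ^ n)) fun k hk => by
    rw [a_eq_intCoeff, intCoeff_of_neg _ hk, zero_mul]

theorem f0_recurrence (n : ℕ) (hn : 1 ≤ n) :
    f0 n = 3 * f0 (n - 1) + 4 * f1 (n - 1) := by
  obtain ⟨m, rfl⟩ := Nat.exists_eq_add_of_le' hn
  rw [Nat.add_sub_cancel, f0_eq_autocorr, f0_eq_autocorr, f1_eq_autocorr, funext (a_succ m),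
    autocorr_zero_three_shifts (hasFiniteSupport_a m), autocorr_a_two_mul_two_pow]
  ring
end

section
/- For every k ≥ 2, the polynomial X^k - X^{k-1} - X^{k-2} - ... - X - 1 has a unique real root ρ with ρ > 1, and every other complex root has absolute value strictly less than 1 (i.e., the k-bonacci constant is a PV number). -/
open Complex

/-!
For `t > 0` the ratio `(∑ j < k, t ^ j) / t ^ k` is strictly decreasing, so the equation
`t ^ k = ∑ j < k, t ^ j` has exactly one positive solution `ρ`, and `t ^ k ≤ ∑ j < k, t ^ j`
exactly when `t ≤ ρ`; the triangle inequality then gives `‖z‖ ≤ ρ` for every complex root `z`.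
Multiplying by `X - 1` turns the equation into `z ^ k * (2 - z) = 1`. If `1 ≤ ‖z‖`, then
`‖z‖ ^ k * (2 - ‖z‖) ≥ 1 = ‖z‖ ^ k * ‖2 - z‖`, which forces equality in `‖2 - z‖ ≥ 2 - ‖z‖`,
so `z` is a positive real root, i.e. `z = ρ`.
-/

open Finset

theorem pow_mul_geom_sum_lt_pow_mul_geom_sum {R : Type*} [CommSemiring R] [PartialOrder R]
    [IsStrictOrderedRing R] {k : ℕ} (hk : k ≠ 0) {a b : R} (ha : 0 < a) (hab : a < b) :
    a ^ k * ∑ j ∈ range k, b ^ j < b ^ k * ∑ j ∈ range k, a ^ j := by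
  rw [mul_sum, mul_sum]
  refine sum_lt_sum_of_nonempty (nonempty_range_iff.mpr hk) fun j hj ↦ ?_
  obtain ⟨i, rfl⟩ := Nat.exists_eq_add_of_lt (mem_range.mp hj)
  have hb : 0 < b := ha.trans hab
  calc a ^ (j + i + 1) * b ^ j = a ^ j * b ^ j * a ^ (i + 1) := by ring
    _ < a ^ j * b ^ j * b ^ (i + 1) := by gcongr
    _ = b ^ (j + i + 1) * a ^ j := by ring

theorem pow_sub_geom_sum_mul_sub_one {R : Type*} [CommRing R] (x : R) (k : ℕ) :
    (x ^ k - ∑ j ∈ range k, x ^ j) * (x - 1) = 1 - x ^ k * (2 - x) := by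
  linear_combination -(geom_sum_mul x k)

section
variable {K : Type*} [Field K] [LinearOrder K] [IsStrictOrderedRing K] {k : ℕ} {ρ : K}

theorem pow_le_geom_sum_iff_le_root (hk : k ≠ 0) (hρ : 0 < ρ)
    (hρk : ρ ^ k = ∑ j ∈ range k, ρ ^ j) {t : K} (ht : 0 < t) :
    t ^ k ≤ ∑ j ∈ range k, t ^ j ↔ t ≤ ρ := by
  have hρk_pos : 0 < ρ ^ k := pow_pos hρ k
  constructor
  · intro h
    by_contra! hlt
    have := pow_mul_geom_sum_lt_pow_mul_geom_sum hk hρ hlt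
    rw [← hρk] at this
    nlinarith
  · intro h
    rcases h.lt_or_eq with hlt | rfl
    · have := pow_mul_geom_sum_lt_pow_mul_geom_sum hk ht hlt
      rw [← hρk] at this
      nlinarith [pow_pos ht k]
    · exact hρk.le

theorem eq_of_pow_eq_geom_sum (hk : k ≠ 0) (hρ : 0 < ρ)
    (hρk : ρ ^ k = ∑ j ∈ range k, ρ ^ j) {r : K} (hr : 0 < r)
    (hrk : r ^ k = ∑ j ∈ range k, r ^ j) : r = ρ :=
  le_antisymm ((pow_le_geom_sum_iff_le_root hk hρ hρk hr).mp hrk.le)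
    ((pow_le_geom_sum_iff_le_root hk hr hrk hρ).mp hρk.le)

theorem one_le_pow_mul_two_sub (hk : k ≠ 0) (hρ : 0 < ρ)
    (hρk : ρ ^ k = ∑ j ∈ range k, ρ ^ j) {t : K} (h1t : 1 ≤ t) (htρ : t ≤ ρ) :
    1 ≤ t ^ k * (2 - t) := by
  have hneg := (pow_le_geom_sum_iff_le_root hk hρ hρk (by linarith)).mpr htρ
  have := pow_sub_geom_sum_mul_sub_one t k
  nlinarith

end

theorem exists_one_lt_pow_eq_geom_sum {k : ℕ} (hk : 2 ≤ k) :
    ∃ ρ : ℝ, 1 < ρ ∧ ρ ^ k = ∑ j ∈ range k, ρ ^ j := by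
  let q : ℝ → ℝ := fun t ↦ t ^ k - ∑ j ∈ range k, t ^ j
  have hq1 : q 1 < 0 := by
    have : (2 : ℝ) ≤ k := by exact_mod_cast hk
    simp only [q, one_pow, sum_const, card_range, nsmul_eq_mul, mul_one]
    linarith
  have hq2 : 0 < q 2 := by
    have := geom_sum_mul (2 : ℝ) k
    simp only [q]
    norm_num at this ⊢
    linarith
  obtain ⟨ρ, ⟨hρ1, -⟩, hρ⟩ := intermediate_value_Ioo (by norm_num)
    (by fun_prop : Continuous q).continuousOn ⟨hq1, hq2⟩
  exact ⟨ρ, hρ1, sub_eq_zero.mp hρ⟩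

theorem Complex.eq_norm_of_norm_sub_eq {c : ℝ} (hc : 0 < c) {z : ℂ}
    (h : ‖(c : ℂ) - z‖ = c - ‖z‖) : z = ‖z‖ := by
  have hsq : ‖(c : ℂ) - z‖ ^ 2 = c ^ 2 - 2 * c * z.re + ‖z‖ ^ 2 := by
    simp only [Complex.sq_norm, normSq_apply, sub_re, sub_im, ofReal_re, ofReal_im]
    ring
  have hre : z.re = ‖z‖ := by
    rw [h] at hsq
    nlinarith
  calc z = z.re := eq_re_of_ofReal_le (re_eq_norm.mp hre)
    _ = ‖z‖ := by rw [hre]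

theorem Complex.norm_pow_le_geom_sum {z : ℂ} {k : ℕ} (hz : z ^ k = ∑ j ∈ range k, z ^ j) :
    ‖z‖ ^ k ≤ ∑ j ∈ range k, ‖z‖ ^ j := by
  rw [← norm_pow, hz]
  simpa only [norm_pow] using norm_sum_le (range k) (z ^ ·)

theorem Complex.eq_norm_of_pow_eq_geom_sum {k : ℕ} (hk : k ≠ 0) {ρ : ℝ} (hρ : 0 < ρ)
    (hρk : ρ ^ k = ∑ j ∈ range k, ρ ^ j) {z : ℂ}
    (hz : z ^ k = ∑ j ∈ range k, z ^ j) (h1 : 1 ≤ ‖z‖) : z = ‖z‖ := by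
  set r := ‖z‖
  have hrρ : r ≤ ρ :=
    (pow_le_geom_sum_iff_le_root hk hρ hρk (by linarith)).mp (norm_pow_le_geom_sum hz)
  have hz2 : r ^ k * ‖2 - z‖ = 1 := by
    have := pow_sub_geom_sum_mul_sub_one z k
    rw [← hz, sub_self, zero_mul, eq_comm, sub_eq_zero] at this
    simpa [r] using congrArg norm this.symm
  -- `r ^ k * (2 - r) ≤ r ^ k * ‖2 - z‖ = 1 ≤ r ^ k * (2 - r)`, so the triangle inequality is tight
  apply eq_norm_of_norm_sub_eq two_pos
  have hle := one_le_pow_mul_two_sub hk hρ hρk h1 hrρ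
  have htri : 2 - r ≤ ‖2 - z‖ := by simpa using norm_sub_norm_le (2 : ℂ) z
  have : 0 < r ^ k := by positivity
  push_cast
  nlinarith

/-- The k-bonacci constant is a PV number: X^k - X^{k-1} - ⋯ - X - 1 has a unique
real root ρ > 1, and every other complex root has absolute value < 1. -/
theorem kbonacci_is_PV (k : ℕ) (hk : 2 ≤ k) :
    ∃ ρ : ℝ, 1 < ρ ∧ ρ ^ k = ∑ j ∈ Finset.range k, ρ ^ j ∧
      (∀ r : ℝ, 1 < r → r ^ k = ∑ j ∈ Finset.range k, r ^ j → r = ρ) ∧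
      (∀ z : ℂ, z ^ k = ∑ j ∈ Finset.range k, z ^ j → z ≠ (ρ : ℂ) → ‖z‖ < 1) := by
  have hk0 : k ≠ 0 := by omega
  obtain ⟨ρ, hρ1, hρ⟩ := exists_one_lt_pow_eq_geom_sum hk
  have hρ0 : 0 < ρ := by linarith
  have huniq (r : ℝ) (hr : 1 < r) (hrk : r ^ k = ∑ j ∈ range k, r ^ j) : r = ρ :=
    eq_of_pow_eq_geom_sum hk0 hρ0 hρ (by linarith) hrk
  refine ⟨ρ, hρ1, hρ, huniq, fun z hz hzρ ↦ ?_⟩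
  by_contra! h1
  have hzr := eq_norm_of_pow_eq_geom_sum hk0 hρ0 hρ hz h1
  have hr : ‖z‖ ^ k = ∑ j ∈ range k, ‖z‖ ^ j := by
    rw [hzr] at hz
    exact_mod_cast hz
  rcases h1.lt_or_eq with hlt | heq
  · exact hzρ (hzr.trans (congrArg _ (huniq _ hlt hr)))
  · rw [← heq] at hr
    simp only [one_pow, sum_const, card_range, nsmul_eq_mul, mul_one] at hr
    norm_cast at hr
    omega
end
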